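/- Let A be a free associative K-algebra on generators x₁,…,x_k. Given words u₁,…,u_k ∈ A, the relation Σᵢ [uᵢ, xᵢ] = 0 holds if and only if there exists f ∈ A/(K + [A,A]) such that uᵢ equals the necklace derivative ∂f/∂xᵢ for every i. -/

import Mathlib

variable (K : Type) [Field K] [CharZero K] (n : ℕ)

/-- The monomial (word) in the free algebra `K⟨x₁,…,xₙ⟩` determined by a list of indices. -/
def wordProd (w : List (Fin n)) : FreeAlgebra K (Fin n) :=
  (w.map (FreeAlgebra.ι K)).prod

/-- The necklace derivative `∂w/∂x_j` of a word. -/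
def wordDeriv (j : Fin n) (w : List (Fin n)) : FreeAlgebra K (Fin n) :=
  ∑ k ∈ Finset.range w.length,
    if w[k]? = some j then wordProd K n ((w.rotate k).tail) else 0

/-- The necklace derivative `∂/∂x_j`, extended `K`-linearly to the whole free algebra
using the basis of words. -/
noncomputable def nderiv (j : Fin n) :
    FreeAlgebra K (Fin n) →ₗ[K] FreeAlgebra K (Fin n) :=
  (FreeAlgebra.basisFreeMonoid K (Fin n)).constr ℕ
    (fun w => wordDeriv K n j (FreeMonoid.toList w))

/-! Let `R` rotate a word by one letter, let `C` send a word to the sum of its rotations and let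
`∂ᵢᴸ` strip a leading `xᵢ` (and kill words not starting with `xᵢ`). On words one checks
`∂ᵢ = ∂ᵢᴸ ∘ C` and `Σᵢ [∂ᵢᴸ b, xᵢ] = R b - b`; as `R ∘ C = C`, every `Σᵢ [∂ᵢ f, xᵢ]` vanishes.

Conversely, if `Σᵢ [uᵢ, xᵢ] = 0`, then `s = Σᵢ xᵢ uᵢ = Σᵢ uᵢ xᵢ` satisfies `R s = s` and
`∂ᵢᴸ s = uᵢ`. The telescoping identity `C - E = H ∘ (R - 1)`, with `E w = |w| w` and
`H w = Σ_{j < k < |w|} Rʲ w`, shows that `C = E` on rotation-invariant elements. Hence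
`f = Σ_w (s_w / |w|) w`, rotation invariant as well, satisfies
`∂ᵢ f = ∂ᵢᴸ (C f) = ∂ᵢᴸ (E f) = ∂ᵢᴸ s = uᵢ`. -/

namespace Necklace

variable {K n}
omit [CharZero K]

lemma wordProd_cons (a : Fin n) (l : List (Fin n)) :
    wordProd K n (a :: l) = FreeAlgebra.ι K a * wordProd K n l := by
  simp [wordProd]

lemma basisFreeMonoid_eq_wordProd (w : FreeMonoid (Fin n)) :
    FreeAlgebra.basisFreeMonoid K (Fin n) w = wordProd K n w.toList := by
  simp [FreeAlgebra.basisFreeMonoid, FreeAlgebra.equivMonoidAlgebraFreeMonoid, wordProd,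
    FreeMonoid.lift_apply]

noncomputable def extendWords (φ : List (Fin n) → FreeAlgebra K (Fin n)) :
    FreeAlgebra K (Fin n) →ₗ[K] FreeAlgebra K (Fin n) :=
  (FreeAlgebra.basisFreeMonoid K (Fin n)).constr ℕ fun w => φ w.toList

@[simp]
lemma extendWords_wordProd (φ : List (Fin n) → FreeAlgebra K (Fin n)) (l : List (Fin n)) :
    extendWords φ (wordProd K n l) = φ l := by
  rw [← FreeMonoid.toList_ofList l, ← basisFreeMonoid_eq_wordProd, extendWords,
    Module.Basis.constr_basis]

lemma linearMap_ext_wordProd {F G : FreeAlgebra K (Fin n) →ₗ[K] FreeAlgebra K (Fin n)}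
    (h : ∀ l, F (wordProd K n l) = G (wordProd K n l)) : F = G :=
  (FreeAlgebra.basisFreeMonoid K (Fin n)).ext fun w => by
    simpa only [basisFreeMonoid_eq_wordProd] using h w.toList

lemma nderiv_wordProd (j : Fin n) (l : List (Fin n)) :
    nderiv K n j (wordProd K n l) = wordDeriv K n j l :=
  extendWords_wordProd _ l

noncomputable def dropLeft (i : Fin n) : FreeAlgebra K (Fin n) →ₗ[K] FreeAlgebra K (Fin n) :=
  extendWords fun l => if l.head? = some i then wordProd K n l.tail else 0

noncomputable def rotate : FreeAlgebra K (Fin n) →ₗ[K] FreeAlgebra K (Fin n) :=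
  extendWords fun l => wordProd K n (l.rotate 1)

noncomputable def cyclicSum : FreeAlgebra K (Fin n) →ₗ[K] FreeAlgebra K (Fin n) :=
  extendWords fun l => ∑ k ∈ Finset.range l.length, wordProd K n (l.rotate k)

@[simp]
lemma dropLeft_wordProd (i : Fin n) (l : List (Fin n)) :
    dropLeft i (wordProd K n l) = if l.head? = some i then wordProd K n l.tail else 0 :=
  extendWords_wordProd _ l

@[simp]
lemma rotate_wordProd (l : List (Fin n)) : rotate (wordProd K n l) = wordProd K n (l.rotate 1) :=
  extendWords_wordProd _ l

@[simp]
lemma cyclicSum_wordProd (l : List (Fin n)) :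
    cyclicSum (wordProd K n l) = ∑ k ∈ Finset.range l.length, wordProd K n (l.rotate k) :=
  extendWords_wordProd _ l

lemma dropLeft_ι_mul (i j : Fin n) (a : FreeAlgebra K (Fin n)) :
    dropLeft i (FreeAlgebra.ι K j * a) = if j = i then a else 0 := by
  have h : dropLeft i ∘ₗ LinearMap.mulLeft K (FreeAlgebra.ι K j) =
      if j = i then LinearMap.id else 0 :=
    linearMap_ext_wordProd fun l => by
      split_ifs <;> simp [← wordProd_cons, *]
  split_ifs at h ⊢ <;> simpa using LinearMap.congr_fun h a

lemma rotate_ι_mul (j : Fin n) (a : FreeAlgebra K (Fin n)) :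
    rotate (FreeAlgebra.ι K j * a) = a * FreeAlgebra.ι K j := by
  have h : rotate ∘ₗ LinearMap.mulLeft K (FreeAlgebra.ι K j) =
      LinearMap.mulRight K (FreeAlgebra.ι K j) :=
    linearMap_ext_wordProd fun l => by
      rw [LinearMap.comp_apply, LinearMap.mulLeft_apply, ← wordProd_cons, rotate_wordProd]
      simp [wordProd]
  simpa using LinearMap.congr_fun h a

lemma sum_dropLeft_commutator (b : FreeAlgebra K (Fin n)) :
    ∑ i, (dropLeft i b * FreeAlgebra.ι K i - FreeAlgebra.ι K i * dropLeft i b) =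
      rotate b - b := by
  have h : (∑ i, (LinearMap.mulRight K (FreeAlgebra.ι K i) -
      LinearMap.mulLeft K (FreeAlgebra.ι K i)) ∘ₗ dropLeft i :
        FreeAlgebra K (Fin n) →ₗ[K] FreeAlgebra K (Fin n)) = rotate - LinearMap.id := by
    refine linearMap_ext_wordProd fun l => ?_
    simp only [LinearMap.sum_apply, LinearMap.comp_apply, LinearMap.sub_apply,
      LinearMap.mulRight_apply, LinearMap.mulLeft_apply, dropLeft_wordProd, rotate_wordProd,
      LinearMap.id_apply]
    cases l with
    | nil => simp [wordProd]
    | cons a t => simp [wordProd]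
  simpa using LinearMap.congr_fun h b

lemma nderiv_eq_dropLeft_comp_cyclicSum (i : Fin n) :
    nderiv K n i = dropLeft i ∘ₗ cyclicSum := by
  refine linearMap_ext_wordProd fun l => ?_
  rw [nderiv_wordProd, wordDeriv, LinearMap.comp_apply, cyclicSum_wordProd, map_sum]
  refine Finset.sum_congr rfl fun k hk => ?_
  rw [dropLeft_wordProd, List.head?_rotate (Finset.mem_range.mp hk)]

lemma rotate_cyclicSum (a : FreeAlgebra K (Fin n)) : rotate (cyclicSum a) = cyclicSum a := by
  have h : (rotate ∘ₗ cyclicSum : FreeAlgebra K (Fin n) →ₗ[K] FreeAlgebra K (Fin n)) =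
      cyclicSum := by
    refine linearMap_ext_wordProd fun l => ?_
    simp only [LinearMap.comp_apply, cyclicSum_wordProd, map_sum, rotate_wordProd,
      List.rotate_rotate]
    have shift := Finset.sum_range_succ' (fun k => wordProd K n (l.rotate k)) l.length
    rw [Finset.sum_range_succ, List.rotate_length, List.rotate_zero] at shift
    exact add_right_cancel shift.symm
  exact LinearMap.congr_fun h a

theorem sum_commutator_nderiv (f : FreeAlgebra K (Fin n)) :
    ∑ i, (nderiv K n i f * FreeAlgebra.ι K i - FreeAlgebra.ι K i * nderiv K n i f) = 0 := by
  simp only [nderiv_eq_dropLeft_comp_cyclicSum, LinearMap.comp_apply]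
  rw [sum_dropLeft_commutator, rotate_cyclicSum, sub_self]

noncomputable def euler : FreeAlgebra K (Fin n) →ₗ[K] FreeAlgebra K (Fin n) :=
  extendWords fun l => (l.length : K) • wordProd K n l

noncomputable def invLength : FreeAlgebra K (Fin n) →ₗ[K] FreeAlgebra K (Fin n) :=
  extendWords fun l => (l.length : K)⁻¹ • wordProd K n l

noncomputable def cyclicHomotopy : FreeAlgebra K (Fin n) →ₗ[K] FreeAlgebra K (Fin n) :=
  extendWords fun l =>
    ∑ k ∈ Finset.range l.length, ∑ j ∈ Finset.range k, wordProd K n (l.rotate j)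

@[simp]
lemma euler_wordProd (l : List (Fin n)) :
    euler (wordProd K n l) = (l.length : K) • wordProd K n l :=
  extendWords_wordProd _ l

@[simp]
lemma invLength_wordProd (l : List (Fin n)) :
    invLength (wordProd K n l) = (l.length : K)⁻¹ • wordProd K n l :=
  extendWords_wordProd _ l

@[simp]
lemma cyclicHomotopy_wordProd (l : List (Fin n)) :
    cyclicHomotopy (wordProd K n l) =
      ∑ k ∈ Finset.range l.length, ∑ j ∈ Finset.range k, wordProd K n (l.rotate j) :=
  extendWords_wordProd _ l

lemma cyclicSum_sub_euler :
    (cyclicSum - euler : FreeAlgebra K (Fin n) →ₗ[K] FreeAlgebra K (Fin n)) =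
      cyclicHomotopy ∘ₗ (rotate - LinearMap.id) := by
  refine linearMap_ext_wordProd fun l => ?_
  have telescope (k : ℕ) : ∑ j ∈ Finset.range k,
      (wordProd K n (l.rotate (j + 1)) - wordProd K n (l.rotate j)) =
        wordProd K n (l.rotate k) - wordProd K n l := by
    rw [Finset.sum_range_sub (fun j => wordProd K n (l.rotate j)), List.rotate_zero]
  simp only [LinearMap.sub_apply, LinearMap.comp_apply, LinearMap.id_apply, map_sub,
    cyclicSum_wordProd, euler_wordProd, rotate_wordProd, cyclicHomotopy_wordProd,
    List.length_rotate, List.rotate_rotate, add_comm 1, ← Finset.sum_sub_distrib, telescope]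
  rw [Finset.sum_sub_distrib, Finset.sum_const, Finset.card_range, Nat.cast_smul_eq_nsmul]

lemma cyclicSum_eq_euler_of_rotate_eq {a : FreeAlgebra K (Fin n)} (h : rotate a = a) :
    cyclicSum a = euler a := by
  rw [← sub_eq_zero, ← LinearMap.sub_apply, cyclicSum_sub_euler, LinearMap.comp_apply,
    LinearMap.sub_apply, h, LinearMap.id_apply, sub_self, map_zero]

lemma rotate_invLength (a : FreeAlgebra K (Fin n)) :
    rotate (invLength a) = invLength (rotate a) := by
  have h : (rotate ∘ₗ invLength : FreeAlgebra K (Fin n) →ₗ[K] FreeAlgebra K (Fin n)) =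
      invLength ∘ₗ rotate :=
    linearMap_ext_wordProd fun l => by simp
  exact LinearMap.congr_fun h a

lemma dropLeft_euler_invLength [CharZero K] (i : Fin n) (a : FreeAlgebra K (Fin n)) :
    dropLeft i (euler (invLength a)) = dropLeft i a := by
  have h : (dropLeft i ∘ₗ euler ∘ₗ invLength : FreeAlgebra K (Fin n) →ₗ[K] FreeAlgebra K (Fin n)) =
      dropLeft i := by
    refine linearMap_ext_wordProd fun l => ?_
    rcases l with _ | ⟨b, t⟩
    · simp
    · simp [smul_smul, Nat.cast_add_one_ne_zero]
  exact LinearMap.congr_fun h a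

lemma nderiv_invLength_of_rotate_eq [CharZero K] (i : Fin n) {a : FreeAlgebra K (Fin n)}
    (h : rotate a = a) : nderiv K n i (invLength a) = dropLeft i a := by
  rw [nderiv_eq_dropLeft_comp_cyclicSum, LinearMap.comp_apply,
    cyclicSum_eq_euler_of_rotate_eq (by rw [rotate_invLength, h]), dropLeft_euler_invLength]

end Necklace

/-- `f` ranges over `A` rather than `A/(K + [A,A])`: each `nderiv K n i` vanishes on constants
and commutators, so it factors through that quotient. -/
theorem stmt11 (u : Fin n → FreeAlgebra K (Fin n)) :
    (∑ i : Fin n, (u i * FreeAlgebra.ι K i - FreeAlgebra.ι K i * u i)) = 0 ↔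
    ∃ f : FreeAlgebra K (Fin n), ∀ i : Fin n, u i = nderiv K n i f := by
  constructor
  · intro h
    set s := ∑ j, FreeAlgebra.ι K j * u j
    have hs : Necklace.rotate s = s := by
      rw [map_sum]
      simp only [Necklace.rotate_ι_mul]
      rwa [Finset.sum_sub_distrib, sub_eq_zero] at h
    refine ⟨Necklace.invLength s, fun i => ?_⟩
    rw [Necklace.nderiv_invLength_of_rotate_eq i hs, map_sum]
    simp [Necklace.dropLeft_ι_mul]
  · rintro ⟨f, hf⟩
    simpa only [hf] using Necklace.sum_commutator_nderiv f
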